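/- arXiv:2301.12880 — 2 statements merged into one kernel-verified Lean document; each statement's English description precedes it below -/
import Mathlib

section
/- For measurable partitions X = X₁ ∪̇ X₂ and Y = Y₁ ∪̇ Y₂ and K the transfer operator of a coupling π = k·(μ⊗ν), the conditions K 1_{X_i} = 1_{Y_i} (ν-a.e.) for i=1,2 imply π(X₁×Y₂) = π(X₂×Y₁) = 0 and μ(X_i) = ν(Y_i) for i = 1,2. -/
/-!
Fubini turns `π (A ×ˢ B)` into `∫⁻ y in B, (K 1_A)(y) dν`. When `K 1_{X₁} = 1_{Y₁}` this is
`ν (B ∩ Y₁)`, which vanishes for `B = Y₁ᶜ` and equals `ν Y₁` for `B = univ`; the first marginal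
identifies the latter with `μ X₁`. The same argument applies to `X₁ᶜ` and `Y₁ᶜ`.
-/

open MeasureTheory

section CouplingDensity

variable {α β : Type*} [MeasurableSpace α] [MeasurableSpace β]
  {μ : Measure α} {ν : Measure β} [SFinite μ] [SFinite ν] {k : α → β → ℝ}

theorem withDensity_prod_apply_prod (hk : Measurable (Function.uncurry k))
    (hk0 : ∀ x y, 0 ≤ k x y) {A : Set α} {B : Set β} (hA : MeasurableSet A)
    (hB : MeasurableSet B) (hint : ∀ᵐ y ∂ν, IntegrableOn (fun x => k x y) A μ) :
    (μ.prod ν).withDensity (fun p => ENNReal.ofReal (k p.1 p.2)) (A ×ˢ B) =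
      ∫⁻ y in B, ENNReal.ofReal (∫ x in A, k x y ∂μ) ∂ν := by
  rw [withDensity_apply _ (hA.prod hB), ← Measure.prod_restrict,
    lintegral_prod_symm (fun p => ENNReal.ofReal (k p.1 p.2))
      (ENNReal.measurable_ofReal.comp hk).aemeasurable]
  refine lintegral_congr_ae ?_
  filter_upwards [ae_restrict_of_ae hint] with y hy
  exact (ofReal_integral_eq_lintegral_ofReal hy (ae_of_all _ fun x => hk0 x y)).symm

theorem withDensity_prod_apply_prod_of_integral_eq_indicator
    (hk : Measurable (Function.uncurry k)) (hk0 : ∀ x y, 0 ≤ k x y) {A : Set α} {B B' : Set β}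
    (hA : MeasurableSet A) (hB : MeasurableSet B) (hB' : MeasurableSet B')
    (hint : ∀ᵐ y ∂ν, IntegrableOn (fun x => k x y) A μ)
    (hAB : ∀ᵐ y ∂ν, ∫ x in A, k x y ∂μ = B.indicator (fun _ => (1 : ℝ)) y) :
    (μ.prod ν).withDensity (fun p => ENNReal.ofReal (k p.1 p.2)) (A ×ˢ B') = ν (B' ∩ B) := by
  have hofReal : ∀ᵐ y ∂ν.restrict B',
      ENNReal.ofReal (∫ x in A, k x y ∂μ) = B.indicator 1 y := by
    filter_upwards [ae_restrict_of_ae hAB] with y hy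
    by_cases hyB : y ∈ B <;> simp [hy, hyB]
  rw [withDensity_prod_apply_prod hk hk0 hA hB' hint, lintegral_congr_ae hofReal,
    lintegral_indicator_one hB, Measure.restrict_apply hB, Set.inter_comm]

end CouplingDensity

theorem coherent_partition_mass_preservation_general {d : ℕ}
    (X Y : Set (EuclideanSpace ℝ (Fin d)))
    (μ : Measure X) (ν : Measure Y) [IsProbabilityMeasure μ] [IsProbabilityMeasure ν]
    (k : X → Y → ℝ) (hk : Measurable (Function.uncurry k))
    (hk0 : ∀ x y, 0 ≤ k x y) (C : ℝ) (hkb : ∀ x y, k x y ≤ C)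
    (π : Measure (X × Y))
    (hπ : π = (μ.prod ν).withDensity fun p => ENNReal.ofReal (k p.1 p.2))
    (hmarg1 : π.map Prod.fst = μ)
    (X₁ : Set X) (Y₁ : Set Y) (hX₁ : MeasurableSet X₁) (hY₁ : MeasurableSet Y₁)
    (hcoh1 : ∀ᵐ y ∂ν, ∫ x in X₁, k x y ∂μ = Set.indicator Y₁ (fun _ => (1 : ℝ)) y)
    (hcoh2 : ∀ᵐ y ∂ν, ∫ x in X₁ᶜ, k x y ∂μ = Set.indicator Y₁ᶜ (fun _ => (1 : ℝ)) y) :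
    π (X₁ ×ˢ Y₁ᶜ) = 0 ∧ π (X₁ᶜ ×ˢ Y₁) = 0 ∧ μ X₁ = ν Y₁ ∧ μ X₁ᶜ = ν Y₁ᶜ := by
  have hint : ∀ (A : Set X), ∀ᵐ y ∂ν, IntegrableOn (fun x => k x y) A μ := fun A =>
    ae_of_all _ fun y => (Integrable.of_bound hk.of_uncurry_right.aestronglyMeasurable C
      (ae_of_all _ fun x => by rw [Real.norm_of_nonneg (hk0 x y)]; exact hkb x y)).integrableOn
  have hπ₁ := fun B (hB : MeasurableSet B) => hπ ▸
    withDensity_prod_apply_prod_of_integral_eq_indicator hk hk0 hX₁ hY₁ hB (hint _) hcoh1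
  have hπ₂ := fun B (hB : MeasurableSet B) => hπ ▸
    withDensity_prod_apply_prod_of_integral_eq_indicator hk hk0 hX₁.compl hY₁.compl hB
      (hint _) hcoh2
  have hμ : ∀ A, MeasurableSet A → μ A = π (A ×ˢ Set.univ) := fun A hA => by
    rw [← hmarg1, Measure.map_apply measurable_fst hA, Set.prod_univ]
  refine ⟨?_, ?_, ?_, ?_⟩
  · simp [hπ₁ _ hY₁.compl]
  · simp [hπ₂ _ hY₁]
  · simp [hμ _ hX₁, hπ₁ _ MeasurableSet.univ]
  · simp [hμ _ hX₁.compl, hπ₂ _ MeasurableSet.univ]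

/-- If the transfer operator of a coupling `π = k·(μ⊗ν)` maps the indicators of a
partition `X = X₁ ∪̇ X₂` to those of `Y = Y₁ ∪̇ Y₂`, then `π` puts no mass on
`X₁ × Y₂` and `X₂ × Y₁`, and the partitions have matching masses. -/
theorem coherent_partition_mass_preservation {d : ℕ}
    (X Y : Set (EuclideanSpace ℝ (Fin d))) (hX : IsCompact X) (hY : IsCompact Y)
    (μ : Measure X) (ν : Measure Y) [IsProbabilityMeasure μ] [IsProbabilityMeasure ν]
    (k : X → Y → ℝ) (hk : Measurable (Function.uncurry k))
    (hk0 : ∀ x y, 0 ≤ k x y) (C : ℝ) (hkb : ∀ x y, k x y ≤ C)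
    (π : Measure (X × Y))
    (hπ : π = (μ.prod ν).withDensity fun p => ENNReal.ofReal (k p.1 p.2))
    (hmarg1 : π.map Prod.fst = μ) (hmarg2 : π.map Prod.snd = ν)
    (X₁ : Set X) (Y₁ : Set Y) (hX₁ : MeasurableSet X₁) (hY₁ : MeasurableSet Y₁)
    (hcoh1 : ∀ᵐ y ∂ν, ∫ x in X₁, k x y ∂μ = Set.indicator Y₁ (fun _ => (1 : ℝ)) y)
    (hcoh2 : ∀ᵐ y ∂ν, ∫ x in X₁ᶜ, k x y ∂μ = Set.indicator Y₁ᶜ (fun _ => (1 : ℝ)) y) :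
    π (X₁ ×ˢ Y₁ᶜ) = 0 ∧ π (X₁ᶜ ×ˢ Y₁) = 0 ∧ μ X₁ = ν Y₁ ∧ μ X₁ᶜ = ν Y₁ᶜ :=
  coherent_partition_mass_preservation_general X Y μ ν k hk hk0 C hkb π hπ hmarg1 X₁ Y₁ hX₁ hY₁
    hcoh1 hcoh2
end

section
/- Conversely, if GW(𝕏,𝕐) = 0 for compact metric measure spaces 𝕏 = (X,d_X,μ) and 𝕐 = (Y,d_Y,ν) with μ, ν fully supported, then there exists a surjective isometry I : X → Y with I_#μ = ν. -/
/-!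
By Prokhorov's theorem the couplings of `μ` and `ν` form a compact set on which the
Gromov–Wasserstein cost is continuous, so the infimum is attained by a coupling `π` of cost `0`.
The continuous distortion `(d_X(x, x') - d_Y(y, y'))²` then vanishes on `supp π × supp π`.
Full support of `μ` and `ν` makes both projections of the compact set `supp π` onto, so
`supp π` is the graph of a surjective isometry `I`; as `π` lives on this graph, `ν = I_# μ`.
-/

open MeasureTheory

/-- The Gromov--Wasserstein quadratic cost of a plan `π`. -/
noncomputable def GWcost {X Y : Type*} [MetricSpace X] [MetricSpace Y]
    [MeasurableSpace X] [MeasurableSpace Y] (π : Measure (X × Y)) : ℝ :=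
  ∫ p, ∫ q, (dist p.1 q.1 - dist p.2 q.2) ^ 2 ∂π ∂π

open Set

namespace MeasureTheory

namespace Measure

variable {Z W : Type*} [TopologicalSpace Z] [MeasurableSpace Z]
  [TopologicalSpace W] [MeasurableSpace W]

theorem eq_zero_of_mem_support_of_integral_eq_zero {ρ : Measure Z} {f : Z → ℝ}
    (hf : Continuous f) (hf₀ : 0 ≤ f) (hfi : Integrable f ρ) (hint : ∫ z, f z ∂ρ = 0)
    {z : Z} (hz : z ∈ ρ.support) : f z = 0 := by
  by_contra hne
  have hpos : 0 < ρ {y | 0 < f y} :=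
    (mem_support_iff_forall z).1 hz _ <|
      (isOpen_lt continuous_const hf).mem_nhds ((hf₀ z).lt_of_ne' hne)
  have hae : f =ᵐ[ρ] 0 := (integral_eq_zero_iff_of_nonneg hf₀ hfi).1 hint
  exact hpos.ne' (measure_mono_null (fun y hy => hy.ne') (ae_iff.1 hae))

theorem prodMk_mem_support_prod {μ : Measure Z} {ν : Measure W} [SFinite ν] {z : Z} {w : W}
    (hz : z ∈ μ.support) (hw : w ∈ ν.support) : (z, w) ∈ (μ.prod ν).support := by
  refine (mem_support_iff_forall _).2 fun s hs => ?_
  obtain ⟨u, hu, v, hv, huv⟩ := mem_nhds_prod_iff.1 hs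
  calc 0 < μ u * ν v :=
        ENNReal.mul_pos ((mem_support_iff_forall z).1 hz u hu).ne'
          ((mem_support_iff_forall w).1 hw v hv).ne'
    _ ≤ μ.prod ν (u ×ˢ v) := (prod_prod u v).ge
    _ ≤ μ.prod ν s := measure_mono huv

theorem image_support_eq_univ [OpensMeasurableSpace Z] [CompactSpace Z]
    [HereditarilyLindelofSpace Z] [BorelSpace W] [T2Space W] {π : Measure Z} {μ : Measure W}
    [μ.IsOpenPosMeasure] {f : Z → W} (hf : Continuous f) (hπ : π.map f = μ) :
    f '' π.support = univ := by
  have hclosed : IsClosed (f '' π.support) :=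
    (isClosed_support.isCompact.image hf).isClosed
  by_contra hne
  refine hclosed.isOpen_compl.measure_ne_zero μ (nonempty_compl.2 hne) ?_
  rw [← hπ, map_apply hf.measurable hclosed.isOpen_compl.measurableSet]
  exact measure_mono_null (fun z hz hzs => hz (mem_image_of_mem f hzs)) measure_compl_support

end Measure

theorem ProbabilityMeasure.isClosed_setOf_map_eq {Ω Ω' : Type*} [TopologicalSpace Ω]
    [MeasurableSpace Ω] [OpensMeasurableSpace Ω] [TopologicalSpace Ω'] [MeasurableSpace Ω']
    [BorelSpace Ω'] [HasOuterApproxClosed Ω'] {f : Ω → Ω'} (hf : Continuous f)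
    (μ : Measure Ω') [IsProbabilityMeasure μ] :
    IsClosed {π : ProbabilityMeasure Ω | (π : Measure Ω).map f = μ} := by
  let μ' : ProbabilityMeasure Ω' := ⟨μ, ‹_›⟩
  convert (isClosed_singleton (x := μ')).preimage (ProbabilityMeasure.continuous_map hf) using 1
  ext π
  exact ⟨fun h => ProbabilityMeasure.toMeasure_injective h,
    fun h => congrArg ProbabilityMeasure.toMeasure h⟩

end MeasureTheory

theorem exists_isometry_of_forall_dist_eq {X Y : Type*} [PseudoMetricSpace X] [MetricSpace Y]
    {S : Set (X × Y)} (hfst : Prod.fst '' S = univ) (hsnd : Prod.snd '' S = univ)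
    (hS : ∀ p ∈ S, ∀ q ∈ S, dist p.1 q.1 = dist p.2 q.2) :
    ∃ I : X → Y, Isometry I ∧ Function.Surjective I ∧ ∀ p ∈ S, I p.1 = p.2 := by
  have hpartner (x : X) : ∃ y, (x, y) ∈ S := by
    obtain ⟨p, hp, rfl⟩ := hfst.symm ▸ mem_univ x
    exact ⟨p.2, hp⟩
  choose I hI using hpartner
  have hgraph : ∀ p ∈ S, I p.1 = p.2 := fun p hp =>
    dist_eq_zero.1 <| by simpa using (hS _ (hI p.1) p hp).symm
  refine ⟨I, .of_dist_eq fun x x' => (hS _ (hI x) _ (hI x')).symm, fun y => ?_, hgraph⟩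
  obtain ⟨p, hp, rfl⟩ := hsnd.symm ▸ mem_univ y
  exact ⟨p.1, hgraph p hp⟩

section GromovWasserstein

variable {X Y : Type*} [MetricSpace X] [MetricSpace Y]

variable (X Y) in
def gwDistortion : C((X × Y) × (X × Y), ℝ) :=
  ⟨fun r => (dist r.1.1 r.2.1 - dist r.1.2 r.2.2) ^ 2, by fun_prop⟩

variable [MeasurableSpace X] [MeasurableSpace Y]

theorem GWcost_nonneg (π : Measure (X × Y)) : 0 ≤ GWcost π :=
  integral_nonneg fun _ => integral_nonneg fun _ => sq_nonneg _

/-- The couplings `Π(μ, ν)`. -/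
def couplings (μ : Measure X) (ν : Measure Y) : Set (ProbabilityMeasure (X × Y)) :=
  {π | (π : Measure (X × Y)).map Prod.fst = μ ∧ (π : Measure (X × Y)).map Prod.snd = ν}

variable [CompactSpace X] [CompactSpace Y] [BorelSpace X] [BorelSpace Y]

theorem integrable_gwDistortion (ρ : Measure ((X × Y) × (X × Y))) [IsFiniteMeasure ρ] :
    Integrable (gwDistortion X Y) ρ :=
  (gwDistortion X Y).continuous.integrable_of_hasCompactSupport (.of_compactSpace _)

theorem GWcost_eq_integral_prod (π : Measure (X × Y)) [IsFiniteMeasure π] :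
    GWcost π = ∫ r, gwDistortion X Y r ∂(π.prod π) :=
  (integral_prod _ (integrable_gwDistortion _)).symm

theorem continuous_GWcost :
    Continuous fun π : ProbabilityMeasure (X × Y) => GWcost (π : Measure (X × Y)) := by
  simp_rw [GWcost_eq_integral_prod]
  exact (ProbabilityMeasure.continuous_integral_continuousMap (gwDistortion X Y)).comp
    (ProbabilityMeasure.continuous_prod.comp (continuous_id.prodMk continuous_id))

theorem isCompact_couplings (μ : Measure X) (ν : Measure Y) [IsProbabilityMeasure μ]
    [IsProbabilityMeasure ν] : IsCompact (couplings μ ν) :=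
  ((ProbabilityMeasure.isClosed_setOf_map_eq continuous_fst μ).inter
    (ProbabilityMeasure.isClosed_setOf_map_eq continuous_snd ν)).isCompact

theorem exists_isMinOn_GWcost_couplings (μ : Measure X) (ν : Measure Y) [IsProbabilityMeasure μ]
    [IsProbabilityMeasure ν] (hne : (couplings μ ν).Nonempty) :
    ∃ π ∈ couplings μ ν,
      IsMinOn (fun π : ProbabilityMeasure (X × Y) => GWcost (π : Measure (X × Y)))
        (couplings μ ν) π :=
  (isCompact_couplings μ ν).exists_isMinOn hne continuous_GWcost.continuousOn

theorem exists_coupling_GWcost_eq_zero (μ : Measure X) (ν : Measure Y) [IsProbabilityMeasure μ]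
    [IsProbabilityMeasure ν]
    (hGW : ∀ δ : ℝ, 0 < δ → ∃ π : Measure (X × Y), IsProbabilityMeasure π ∧
      π.map Prod.fst = μ ∧ π.map Prod.snd = ν ∧ GWcost π < δ) :
    ∃ π ∈ couplings μ ν, GWcost (π : Measure (X × Y)) = 0 := by
  have hGW' (δ : ℝ) (hδ : 0 < δ) :
      ∃ π ∈ couplings μ ν, GWcost (π : Measure (X × Y)) < δ := by
    obtain ⟨π, hπ, hfst, hsnd, hcost⟩ := hGW δ hδ
    exact ⟨⟨π, hπ⟩, ⟨hfst, hsnd⟩, hcost⟩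
  obtain ⟨π₀, hπ₀, -⟩ := hGW' 1 one_pos
  obtain ⟨π, hπ, hmin⟩ := exists_isMinOn_GWcost_couplings μ ν ⟨π₀, hπ₀⟩
  refine ⟨π, hπ, le_antisymm (forall_gt_iff_le.1 fun δ hδ => ?_) (GWcost_nonneg _)⟩
  obtain ⟨π', hπ', hcost⟩ := hGW' δ hδ
  exact (hmin hπ').trans_lt hcost

theorem dist_fst_eq_dist_snd_of_GWcost_eq_zero {π : Measure (X × Y)} [IsFiniteMeasure π]
    (hπ : GWcost π = 0) {p q : X × Y} (hp : p ∈ π.support) (hq : q ∈ π.support) :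
    dist p.1 q.1 = dist p.2 q.2 := by
  rw [GWcost_eq_integral_prod] at hπ
  have := Measure.eq_zero_of_mem_support_of_integral_eq_zero (gwDistortion X Y).continuous
    (fun _ => sq_nonneg _) (integrable_gwDistortion _) hπ (Measure.prodMk_mem_support_prod hp hq)
  exact sub_eq_zero.1 (pow_eq_zero_iff two_ne_zero |>.1 this)

end GromovWasserstein

/-- If the Gromov--Wasserstein cost between two compact metric measure spaces with
fully supported measures is `0`, then there is a surjective measure-preserving
isometry between them. -/
theorem isometry_of_gw_zero {X Y : Type*}
    [MetricSpace X] [CompactSpace X] [MeasurableSpace X] [BorelSpace X]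
    [MetricSpace Y] [CompactSpace Y] [MeasurableSpace Y] [BorelSpace Y]
    (μ : Measure X) (ν : Measure Y) [IsProbabilityMeasure μ] [IsProbabilityMeasure ν]
    (hμfull : ∀ s : Set X, IsOpen s → s.Nonempty → 0 < μ s)
    (hνfull : ∀ s : Set Y, IsOpen s → s.Nonempty → 0 < ν s)
    (hGW : ∀ δ : ℝ, 0 < δ → ∃ π : Measure (X × Y), IsProbabilityMeasure π ∧
      π.map Prod.fst = μ ∧ π.map Prod.snd = ν ∧ GWcost π < δ) :
    ∃ I : X → Y, Isometry I ∧ Function.Surjective I ∧ μ.map I = ν := by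
  have : μ.IsOpenPosMeasure := ⟨fun U hU hne => (hμfull U hU hne).ne'⟩
  have : ν.IsOpenPosMeasure := ⟨fun U hU hne => (hνfull U hU hne).ne'⟩
  obtain ⟨π, ⟨hfst, hsnd⟩, hcost⟩ := exists_coupling_GWcost_eq_zero μ ν hGW
  obtain ⟨I, hI, hIsurj, hgraph⟩ := exists_isometry_of_forall_dist_eq
    (Measure.image_support_eq_univ continuous_fst hfst)
    (Measure.image_support_eq_univ continuous_snd hsnd)
    fun p hp q hq => dist_fst_eq_dist_snd_of_GWcost_eq_zero hcost hp hq
  refine ⟨I, hI, hIsurj, ?_⟩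
  rw [← hfst, ← hsnd, Measure.map_map hI.continuous.measurable measurable_fst]
  refine Measure.map_congr ?_
  filter_upwards [Measure.support_mem_ae] with p hp using hgraph p hp
end
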